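/- Let ℓ₁, ℓ₂ > 0 be real, α, β ∈ ℝ, and k ∈ ℂ with k ≠ 0. There exists a nonzero tuple (a₁, b₁, a₂, b₂, c₁, c₂) ∈ ℂ⁶ satisfying the linear system: a₁ + b₁ = c₁, a₂ + b₂ = c₁, ik·(a₁ − b₁ + a₂ − b₂ + c₁) = α·c₁, c₂ + a₁e^{ikℓ₁} − b₁e^{−ikℓ₁} = 0, c₂ + a₂e^{ikℓ₂} − b₂e^{−ikℓ₂} = 0, and βik·c₂ = a₁e^{ikℓ₁} + b₁e^{−ikℓ₁} + a₂e^{ikℓ₂} + b₂e^{−ikℓ₂} + c₂, if and only if (βk² + ikαβ + 3ik − α)·cos(kℓ₁)·cos(kℓ₂) + (−iβk² + iα + 2k)·sin(k(ℓ₁+ℓ₂)) − 2ik·sin(kℓ₁)·sin(kℓ₂) + 2ik = 0. -/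

import Mathlib

/-!
The six vertex conditions form a homogeneous linear system in `(a₁, b₁, a₂, b₂, c₁, c₂)`, so a
nontrivial solution exists iff its determinant vanishes. Expanding the determinant and using
`e^{ikℓⱼ} e^{-ikℓⱼ} = 1`, it equals four times the resonance function once `cos` and `sin` are
written through exponentials.
-/

open Complex Matrix

theorem exists_vec6_ne_zero_iff {R : Type*} [Zero R] (P : (Fin 6 → R) → Prop) :
    (∃ v ≠ 0, P v) ↔
      ∃ a b c d e f : R, (a, b, c, d, e, f) ≠ (0, 0, 0, 0, 0, 0) ∧ P ![a, b, c, d, e, f] := by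
  constructor
  · rintro ⟨v, hv, hP⟩
    refine ⟨v 0, v 1, v 2, v 3, v 4, v 5, fun h => hv ?_, ?_⟩
    · simp only [Prod.mk.injEq] at h
      ext i; fin_cases i <;> simp [h]
    · convert hP; ext i; fin_cases i <;> rfl
  · rintro ⟨a, b, c, d, e, f, hne, hP⟩
    refine ⟨_, fun h => hne ?_, hP⟩
    simp_all [cons_eq_zero_iff]

theorem exp_mul_exp_neg (z : ℂ) : exp z * exp (-z) = 1 := by
  rw [← exp_add, add_neg_cancel, exp_zero]

theorem cos_mul_eq_exp (k ℓ : ℂ) :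
    cos (k * ℓ) = (exp (I * k * ℓ) + exp (-(I * k * ℓ))) / 2 := by
  rw [cos]; ring_nf

theorem sin_mul_eq_exp (k ℓ : ℂ) :
    sin (k * ℓ) = (exp (-(I * k * ℓ)) - exp (I * k * ℓ)) * I / 2 := by
  rw [sin]; ring_nf

/-- Columns are `(a₁, b₁, a₂, b₂, c₁, c₂)`, rows the six vertex conditions in the order of the
theorem; `Eⱼ` and `Fⱼ` stand for `e^{ikℓⱼ}` and `e^{-ikℓⱼ}`. -/
def loopMatrix (α β k E₁ F₁ E₂ F₂ : ℂ) : Matrix (Fin 6) (Fin 6) ℂ :=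
  !![1, 1, 0, 0, -1, 0;
     0, 0, 1, 1, -1, 0;
     I * k, -(I * k), I * k, -(I * k), I * k - α, 0;
     E₁, -F₁, 0, 0, 0, 1;
     0, 0, E₂, -F₂, 0, 1;
     -E₁, -F₁, -E₂, -F₂, 0, β * I * k - 1]

section loopMatrix

variable {α β k E₁ F₁ E₂ F₂ : ℂ}

theorem loopMatrix_mulVec_eq_zero_iff (a₁ b₁ a₂ b₂ c₁ c₂ : ℂ) :
    loopMatrix α β k E₁ F₁ E₂ F₂ *ᵥ ![a₁, b₁, a₂, b₂, c₁, c₂] = 0 ↔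
      a₁ + b₁ = c₁ ∧ a₂ + b₂ = c₁ ∧ I * k * (a₁ - b₁ + a₂ - b₂ + c₁) = α * c₁ ∧
      c₂ + a₁ * E₁ - b₁ * F₁ = 0 ∧ c₂ + a₂ * E₂ - b₂ * F₂ = 0 ∧
      β * I * k * c₂ = a₁ * E₁ + b₁ * F₁ + a₂ * E₂ + b₂ * F₂ + c₂ := by
  simp only [loopMatrix, cons_mulVec, cons_dotProduct, dotProduct_of_isEmpty, head_cons,
    tail_cons, cons_eq_zero_iff, eq_iff_true_of_subsingleton, and_true]
  constructor <;> rintro ⟨h₁, h₂, h₃, h₄, h₅, h₆⟩ <;>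
    exact ⟨by linear_combination h₁, by linear_combination h₂, by linear_combination h₃,
      by linear_combination h₄, by linear_combination h₅, by linear_combination h₆⟩

theorem det_loopMatrix (h₁ : E₁ * F₁ = 1) (h₂ : E₂ * F₂ = 1) :
    (loopMatrix α β k E₁ F₁ E₂ F₂).det =
      4 * ((β * k ^ 2 + I * k * α * β + 3 * I * k - α) * ((E₁ + F₁) / 2) * ((E₂ + F₂) / 2)
        + (-(I * β * k ^ 2) + I * α + 2 * k) * ((F₁ * F₂ - E₁ * E₂) * I / 2)
        - 2 * I * k * ((F₁ - E₁) * I / 2) * ((F₂ - E₂) * I / 2) + 2 * I * k) := by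
  simp only [loopMatrix, det_succ_row_zero, Nat.succ_eq_add_one, Nat.reduceAdd, Fin.isValue,
    of_apply, cons_val', cons_val_fin_one, cons_val_zero, submatrix_apply, Fin.succ_zero_eq_one,
    Fin.succAbove, cons_val_one, submatrix_submatrix, Function.comp_apply, Fin.succ_one_eq_two,
    cons_val, Fin.reduceSucc, det_unique, Fin.default_eq_zero, Fin.castSucc_zero,
    Fin.sum_univ_succ, Fin.coe_ofNat_eq_mod, Nat.zero_mod, pow_zero, one_mul, lt_self_iff_false,
    ↓reduceIte, Fin.castSucc_one, Finset.univ_unique, Fin.val_succ, Fin.val_eq_zero, zero_add,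
    pow_one, Fin.castSucc_succ, neg_mul, Fin.succ_pos, Finset.sum_neg_distrib,
    Finset.sum_singleton, not_lt_zero, Fin.reduceCastSucc, even_two, Even.neg_pow, one_pow,
    Fin.reduceLT, Fin.lt_one_iff, Fin.reduceEq, mul_one, zero_mul, mul_zero, neg_zero, add_zero,
    mul_neg, neg_neg, cons_val_succ, neg_add_rev, Finset.sum_const_zero]
  linear_combination (4 * I * k) * h₁ + (4 * I * k) * h₂
    + (2 * I * k * (F₁ - E₁) * (F₂ - E₂) - k ^ 2 * β * (E₁ + F₁) * (E₂ + F₂)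
      - 2 * α * (F₁ * F₂ - E₁ * E₂)) * I_sq

end loopMatrix

theorem det_loopMatrix_exp (α β k ℓ₁ ℓ₂ : ℂ) :
    (loopMatrix α β k (exp (I * k * ℓ₁)) (exp (-(I * k * ℓ₁)))
      (exp (I * k * ℓ₂)) (exp (-(I * k * ℓ₂)))).det =
    4 * ((β * k ^ 2 + I * k * α * β + 3 * I * k - α) * cos (k * ℓ₁) * cos (k * ℓ₂)
      + (-(I * β * k ^ 2) + I * α + 2 * k) * sin (k * (ℓ₁ + ℓ₂))
      - 2 * I * k * sin (k * ℓ₁) * sin (k * ℓ₂) + 2 * I * k) := by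
  have sin_add_eq_exp : sin (k * (ℓ₁ + ℓ₂)) = (exp (-(I * k * ℓ₁)) * exp (-(I * k * ℓ₂))
      - exp (I * k * ℓ₁) * exp (I * k * ℓ₂)) * I / 2 := by
    rw [sin_mul_eq_exp, mul_add (I * k), neg_add, exp_add, exp_add]
  rw [det_loopMatrix (exp_mul_exp_neg _) (exp_mul_exp_neg _), sin_add_eq_exp, cos_mul_eq_exp,
    cos_mul_eq_exp, sin_mul_eq_exp, sin_mul_eq_exp]

theorem stmt_16_general (ℓ₁ ℓ₂ : ℝ) (α β : ℝ) (k : ℂ) :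
    (∃ a₁ b₁ a₂ b₂ c₁ c₂ : ℂ,
      (a₁, b₁, a₂, b₂, c₁, c₂) ≠ (0, 0, 0, 0, 0, 0) ∧
      a₁ + b₁ = c₁ ∧
      a₂ + b₂ = c₁ ∧
      Complex.I * k * (a₁ - b₁ + a₂ - b₂ + c₁) = α * c₁ ∧
      c₂ + a₁ * Complex.exp (Complex.I * k * ℓ₁)
        - b₁ * Complex.exp (-(Complex.I * k * ℓ₁)) = 0 ∧
      c₂ + a₂ * Complex.exp (Complex.I * k * ℓ₂)
        - b₂ * Complex.exp (-(Complex.I * k * ℓ₂)) = 0 ∧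
      (β : ℂ) * Complex.I * k * c₂
        = a₁ * Complex.exp (Complex.I * k * ℓ₁) + b₁ * Complex.exp (-(Complex.I * k * ℓ₁))
          + a₂ * Complex.exp (Complex.I * k * ℓ₂) + b₂ * Complex.exp (-(Complex.I * k * ℓ₂))
          + c₂)
    ↔ ((β : ℂ) * k ^ 2 + Complex.I * k * α * β + 3 * Complex.I * k - α)
        * Complex.cos (k * ℓ₁) * Complex.cos (k * ℓ₂)
      + (-(Complex.I * β * k ^ 2) + Complex.I * α + 2 * k)
        * Complex.sin (k * (ℓ₁ + ℓ₂))
      - 2 * Complex.I * k * Complex.sin (k * ℓ₁) * Complex.sin (k * ℓ₂)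
      + 2 * Complex.I * k = 0 := by
  simp only [← loopMatrix_mulVec_eq_zero_iff]
  rw [← exists_vec6_ne_zero_iff (fun v => _ *ᵥ v = 0), exists_mulVec_eq_zero_iff,
    det_loopMatrix_exp, mul_eq_zero_iff_left (by norm_num : (4 : ℂ) ≠ 0)]

/-- Resonance condition for a loop of two edges of lengths `ℓ₁`, `ℓ₂` with one lead at
each of the two vertices, a `δ`-coupling of strength `α` at the left vertex and a
`δ′_s`-coupling of strength `β` at the right vertex: a nontrivial generalized
eigenfunction exists iff `(βk² + ikαβ + 3ik - α) cos kℓ₁ cos kℓ₂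
+ (-iβk² + iα + 2k) sin k(ℓ₁+ℓ₂) - 2ik sin kℓ₁ sin kℓ₂ + 2ik = 0`. -/
theorem stmt_16 (ℓ₁ ℓ₂ : ℝ) (hℓ₁ : 0 < ℓ₁) (hℓ₂ : 0 < ℓ₂) (α β : ℝ) (k : ℂ)
    (hk : k ≠ 0) :
    (∃ a₁ b₁ a₂ b₂ c₁ c₂ : ℂ,
      (a₁, b₁, a₂, b₂, c₁, c₂) ≠ (0, 0, 0, 0, 0, 0) ∧
      a₁ + b₁ = c₁ ∧
      a₂ + b₂ = c₁ ∧
      Complex.I * k * (a₁ - b₁ + a₂ - b₂ + c₁) = α * c₁ ∧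
      c₂ + a₁ * Complex.exp (Complex.I * k * ℓ₁)
        - b₁ * Complex.exp (-(Complex.I * k * ℓ₁)) = 0 ∧
      c₂ + a₂ * Complex.exp (Complex.I * k * ℓ₂)
        - b₂ * Complex.exp (-(Complex.I * k * ℓ₂)) = 0 ∧
      (β : ℂ) * Complex.I * k * c₂
        = a₁ * Complex.exp (Complex.I * k * ℓ₁) + b₁ * Complex.exp (-(Complex.I * k * ℓ₁))
          + a₂ * Complex.exp (Complex.I * k * ℓ₂) + b₂ * Complex.exp (-(Complex.I * k * ℓ₂))
          + c₂)
    ↔ ((β : ℂ) * k ^ 2 + Complex.I * k * α * β + 3 * Complex.I * k - α)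
        * Complex.cos (k * ℓ₁) * Complex.cos (k * ℓ₂)
      + (-(Complex.I * β * k ^ 2) + Complex.I * α + 2 * k)
        * Complex.sin (k * (ℓ₁ + ℓ₂))
      - 2 * Complex.I * k * Complex.sin (k * ℓ₁) * Complex.sin (k * ℓ₂)
      + 2 * Complex.I * k = 0 :=
  stmt_16_general ℓ₁ ℓ₂ α β k
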